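/- arXiv:1212.3427 — 2 statements merged into one kernel-verified Lean document; each statement's English description precedes it below -/
import Mathlib

section
/- Let f be a positive smooth function on a Riemannian manifold satisfying Δf - (1+2/n)|∇f|²/(2f) + (n²/(2(n-1)))f² ≥ 0, with n ≥ 2. Then for every real γ ≥ 1/2 - 1/n, the function f^γ satisfies Δ(f^γ) + (γn²/(2(n-1)))·f^{γ+1} ≥ 0. -/
/-- Pointwise computation for powers:  if a positive value `f` (of a smooth function
at a point) with Laplacian `lapF` and gradient norm `gradF` satisfies
`Δf - (1+2/n)|∇f|²/(2f) + (n²/(2(n-1)))f² ≥ 0`, then for every `γ ≥ 1/2 - 1/n`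
the power `f^γ`, whose Laplacian is `γ(γ-1)f^{γ-2}|∇f|² + γf^{γ-1}Δf`, satisfies
`Δ(f^γ) + (γn²/(2(n-1)))·f^{γ+1} ≥ 0`. -/
theorem power_subsolution (n : ℕ) (hn : 2 ≤ n) (γ f lapF gradF : ℝ) (hf : 0 < f)
    (hγ : 1 / 2 - 1 / (n : ℝ) ≤ γ)
    (h : 0 ≤ lapF - (1 + 2 / (n : ℝ)) * gradF ^ 2 / (2 * f) +
        ((n : ℝ) ^ 2 / (2 * ((n : ℝ) - 1))) * f ^ 2) :
    0 ≤ (γ * (γ - 1) * f ^ (γ - 2) * gradF ^ 2 + γ * f ^ (γ - 1) * lapF) +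
        (γ * (n : ℝ) ^ 2 / (2 * ((n : ℝ) - 1))) * f ^ (γ + 1) := by
  set c : ℝ := (n : ℝ) with hc
  have hc2 : (2 : ℝ) ≤ c := by rw [hc]; exact_mod_cast hn
  have hcpos : (0 : ℝ) < c := by linarith
  have hc1 : (0 : ℝ) < c - 1 := by linarith
  have hinv : 1 / c ≤ 1 / 2 := by
    apply one_div_le_one_div_of_le <;> linarith
  have hγ0 : 0 ≤ γ := by linarith
  set A : ℝ := f ^ (γ - 2) with hA
  have hApos : 0 < A := Real.rpow_pos_of_pos hf _
  have e1 : f ^ (γ - 1) = A * f := by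
    rw [show γ - 1 = (γ - 2) + 1 by ring, Real.rpow_add_one hf.ne']
  have e2 : f ^ (γ + 1) = A * f ^ 3 := by
    rw [show γ + 1 = (γ - 2) + 3 by ring, Real.rpow_add hf, hA,
      show (3 : ℝ) = ((3 : ℕ) : ℝ) by norm_num, Real.rpow_natCast]
  rw [e1, e2, show (γ * (γ - 1) * A * gradF ^ 2 + γ * (A * f) * lapF) +
      γ * c ^ 2 / (2 * (c - 1)) * (A * f ^ 3)
    = γ * (γ - 1) * A * gradF ^ 2 + γ * A * f * lapF
      + γ * (c ^ 2 / (2 * (c - 1))) * A * f ^ 3 by ring]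
  have hnec : c ≠ 0 := ne_of_gt hcpos
  have hne1 : c - 1 ≠ 0 := ne_of_gt hc1
  have hne : f ≠ 0 := hf.ne'
  have h' : 0 ≤ 2 * f * lapF - (1 + 2 / c) * gradF ^ 2
      + 2 * (c ^ 2 / (2 * (c - 1))) * f ^ 3 := by
    have h0 := mul_nonneg h (by linarith : (0:ℝ) ≤ 2 * f)
    calc (0:ℝ) ≤ _ := h0
      _ = 2 * f * lapF - (1 + 2 / c) * gradF ^ 2
          + 2 * (c ^ 2 / (2 * (c - 1))) * f ^ 3 := by
        field_simp
  have key : 0 ≤ (γ * (γ - 1 / 2 + 1 / c)) * A * gradF ^ 2 :=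
    mul_nonneg (mul_nonneg (mul_nonneg hγ0 (by linarith)) hApos.le) (sq_nonneg gradF)
  have prod : 0 ≤ (γ * A) * (2 * f * lapF - (1 + 2 / c) * gradF ^ 2
      + 2 * (c ^ 2 / (2 * (c - 1))) * f ^ 3) :=
    mul_nonneg (mul_nonneg hγ0 hApos.le) h'
  set d : ℝ := c ^ 2 / (2 * (c - 1)) with hd
  clear_value c A d
  have expand : γ * (γ - 1) * A * gradF ^ 2 + γ * A * f * lapF + γ * d * A * f ^ 3
      = γ * (γ - 1 / 2 + 1 / c) * A * gradF ^ 2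
        + (γ * A * (2 * f * lapF - (1 + 2 / c) * gradF ^ 2 + 2 * d * f ^ 3)) / 2 := by
    ring
  linarith [prod, key]
end

section
/- Let (I_i) be a sequence of nonnegative reals, q_i = (n/(n-1))^i for n ≥ 2, r_i = 2^{-i-2}R₀ with 0 < R₀ < 1, and suppose I_{i+1} ≤ C^{1/q_i} · q_i^{1/q_i} · (2 r_i^{-2})^{1/q_i} · I_i for all i ≥ 0, where C ≥ 1. Then limsup_{k→∞} I_k ≤ C' · R₀^{-2n} · I₀, where C' depends only on n and C. In particular the infinite products ∏ C^{1/q_i}, ∏ q_i^{1/q_i}, ∏ (2r_i^{-2})^{1/q_i} converge and ∑_{k=0}^∞ 1/q_k = n. -/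
open Filter Real

/-!
With `q = n/(n-1)`, the logarithm of the `i`-th factor of the recursion is an affine function
of `i` times `q^{-i}`, nonnegative and summable in `i`; so iterating the recursion bounds every
`I k` by `I 0` times the exponential of the full sum. The only part of that sum depending on `R₀`
is `-2 log R₀ · ∑' i, q^{-i} = -2n log R₀`, which produces the factor `R₀^{-2n}`.
-/

lemma hasSum_one_div_pow {q : ℝ} (hq : 1 < q) :
    HasSum (fun k : ℕ => 1 / q ^ k) (q / (q - 1)) := by
  have hq0 : q ≠ 0 := by positivity
  have hq1 : q - 1 ≠ 0 := by linarith
  convert hasSum_geometric_of_lt_one (inv_nonneg.2 (by positivity)) (inv_lt_one_of_one_lt₀ hq)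
    using 1
  · simp only [one_div, inv_pow]
  · field_simp

lemma summable_affine_mul_one_div_pow {q : ℝ} (hq : 1 < q) (a b : ℝ) :
    Summable fun i : ℕ => (a * i + b) * (1 / q ^ i) := by
  have hr : ‖q⁻¹‖ < 1 := by
    rw [norm_inv, Real.norm_of_nonneg (by positivity)]
    exact inv_lt_one_of_one_lt₀ hq
  have hlin : Summable fun i : ℕ => (i : ℝ) * q⁻¹ ^ i := by
    simpa using summable_pow_mul_geometric_of_norm_lt_one 1 hr
  refine ((hlin.mul_left a).add ((summable_geometric_of_norm_lt_one hr).mul_left b)).congr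
    fun i => ?_
  simp only [one_div, inv_pow]
  ring

lemma multipliable_rpow_one_div_pow {q a b : ℝ} (hq : 1 < q) {x : ℕ → ℝ} (hx : ∀ i, 0 < x i)
    (hlog : ∀ i, log (x i) = a * i + b) :
    Multipliable fun i : ℕ => x i ^ (1 / q ^ i) :=
  multipliable_of_summable_log (fun i => rpow_pos_of_pos (hx i) _) <|
    (summable_affine_mul_one_div_pow hq a b).congr fun i => by rw [log_rpow (hx i), hlog, mul_comm]

section Iteration

variable {I g : ℕ → ℝ}

lemma le_exp_sum_range_mul_of_le_exp_mul (hrec : ∀ i, I (i + 1) ≤ exp (g i) * I i) (k : ℕ) :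
    I k ≤ exp (∑ i ∈ Finset.range k, g i) * I 0 := by
  induction k with
  | zero => simp
  | succ k ih =>
    calc I (k + 1) ≤ exp (g k) * I k := hrec k
      _ ≤ exp (g k) * (exp (∑ i ∈ Finset.range k, g i) * I 0) := by gcongr
      _ = exp (∑ i ∈ Finset.range (k + 1), g i) * I 0 := by
        rw [Finset.sum_range_succ, exp_add]; ring

lemma limsup_le_exp_tsum_mul_of_le_exp_mul (hI : ∀ i, 0 ≤ I i) (hg : ∀ i, 0 ≤ g i)
    (hgs : Summable g) (hrec : ∀ i, I (i + 1) ≤ exp (g i) * I i) :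
    limsup I atTop ≤ exp (∑' i, g i) * I 0 := by
  refine limsup_le_of_le (isCoboundedUnder_le_of_le atTop hI) (Eventually.of_forall fun k => ?_)
  calc I k ≤ exp (∑ i ∈ Finset.range k, g i) * I 0 := le_exp_sum_range_mul_of_le_exp_mul hrec k
    _ ≤ exp (∑' i, g i) * I 0 := by
      gcongr
      · exact hI 0
      · exact hgs.sum_le_tsum _ fun i _ => hg i

end Iteration

lemma log_two_mul_inv_div_two_pow_sq {R : ℝ} (hR : 0 < R) (i : ℕ) :
    log (2 * ((R / 2 ^ (i + 2))⁻¹) ^ 2) = 2 * log 2 * i + (5 * log 2 - 2 * log R) := by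
  rw [log_mul two_ne_zero (by positivity), log_pow, log_inv, log_div hR.ne' (by positivity),
    log_pow]
  push_cast
  ring

lemma one_lt_div_sub_one {x : ℝ} (hx : 1 < x) : 1 < x / (x - 1) :=
  (one_lt_div (by linarith)).2 (by linarith)

lemma hasSum_one_div_div_sub_one_pow {x : ℝ} (hx : 1 < x) :
    HasSum (fun k : ℕ => 1 / (x / (x - 1)) ^ k) x := by
  have hx1 : x - 1 ≠ 0 := by linarith
  convert hasSum_one_div_pow (one_lt_div_sub_one hx) using 1
  field_simp
  ring

/-- The logarithm of the `i`-th factor `C^{1/q^i} · (q^i)^{1/q^i} · (2 r_i⁻²)^{1/q^i}`,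
`r_i = R / 2^{i+2}`, of the Moser recursion. -/
noncomputable def moserLogFactor (q C R : ℝ) (i : ℕ) : ℝ :=
  ((log q + 2 * log 2) * i + (log C + 5 * log 2 - 2 * log R)) * (1 / q ^ i)

lemma exp_moserLogFactor {q C R : ℝ} (hq : 0 < q) (hC : 0 < C) (hR : 0 < R) (i : ℕ) :
    exp (moserLogFactor q C R i) = C ^ (1 / q ^ i) * (q ^ i) ^ (1 / q ^ i) *
      (2 * ((R / 2 ^ (i + 2))⁻¹) ^ 2) ^ (1 / q ^ i) := by
  rw [rpow_def_of_pos hC, rpow_def_of_pos (by positivity), rpow_def_of_pos (by positivity),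
    ← exp_add, ← exp_add, log_pow, log_two_mul_inv_div_two_pow_sq hR, moserLogFactor]
  ring_nf

lemma moserLogFactor_nonneg {q C R : ℝ} (hq : 1 ≤ q) (hC : 1 ≤ C) (hR₀ : 0 ≤ R) (hR₁ : R ≤ 1)
    (i : ℕ) : 0 ≤ moserLogFactor q C R i := by
  have := log_nonneg hq
  have := log_nonneg hC
  have := log_nonpos hR₀ hR₁
  have : 0 ≤ log 2 := log_nonneg one_le_two
  have : 0 ≤ (log q + 2 * log 2) * i := by positivity
  exact mul_nonneg (by linarith) (by positivity)

lemma hasSum_moserLogFactor {q : ℝ} (hq : 1 < q) (C R : ℝ) :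
    HasSum (moserLogFactor q C R)
      (∑' i, moserLogFactor q C 1 i + log R * -(2 * (q / (q - 1)))) := by
  have h₁ := (summable_affine_mul_one_div_pow hq (log q + 2 * log 2)
    (log C + 5 * log 2)).hasSum.add ((hasSum_one_div_pow hq).mul_left (log R * -2))
  convert h₁ using 1
  · ext i
    simp only [moserLogFactor]
    ring
  · simp only [moserLogFactor, log_one, mul_zero, sub_zero]
    ring

/-- Moser iteration convergence lemma: with `q_i = (n/(n-1))^i` (`n ≥ 2`),
`r_i = R₀/2^{i+2}` (`0 < R₀ < 1`), `C ≥ 1`, and a nonnegative sequence `I`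
satisfying `I_{i+1} ≤ C^{1/q_i}·q_i^{1/q_i}·(2r_i⁻²)^{1/q_i}·I_i`, one has
`limsup I_k ≤ C'·R₀^{-2n}·I₀` with `C' = C'(n, C)`; the relevant infinite products
converge and `∑ 1/q_k = n`. -/
theorem moser_iteration (n : ℕ) (hn : 2 ≤ n) (C : ℝ) (hC : 1 ≤ C) :
    (∑' k : ℕ, 1 / ((n : ℝ) / ((n : ℝ) - 1)) ^ k) = (n : ℝ) ∧
    Multipliable (fun i : ℕ => C ^ (1 / ((n : ℝ) / ((n : ℝ) - 1)) ^ i)) ∧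
    Multipliable (fun i : ℕ =>
      (((n : ℝ) / ((n : ℝ) - 1)) ^ i) ^ (1 / ((n : ℝ) / ((n : ℝ) - 1)) ^ i)) ∧
    (∀ R₀ : ℝ, 0 < R₀ → R₀ < 1 →
      Multipliable (fun i : ℕ =>
        (2 * ((R₀ / 2 ^ (i + 2))⁻¹) ^ 2) ^ (1 / ((n : ℝ) / ((n : ℝ) - 1)) ^ i))) ∧
    ∃ C' : ℝ, 0 < C' ∧ ∀ R₀ : ℝ, 0 < R₀ → R₀ < 1 → ∀ I : ℕ → ℝ, (∀ i, 0 ≤ I i) →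
      (∀ i : ℕ, I (i + 1) ≤
          C ^ (1 / ((n : ℝ) / ((n : ℝ) - 1)) ^ i) *
          ((((n : ℝ) / ((n : ℝ) - 1)) ^ i) ^ (1 / ((n : ℝ) / ((n : ℝ) - 1)) ^ i)) *
          ((2 * ((R₀ / 2 ^ (i + 2))⁻¹) ^ 2) ^ (1 / ((n : ℝ) / ((n : ℝ) - 1)) ^ i)) * I i) →
      limsup I atTop ≤ C' * R₀ ^ (-(2 * (n : ℝ))) * I 0 := by
  have hn' : (1 : ℝ) < n := by exact_mod_cast hn
  have hq_sum := hasSum_one_div_div_sub_one_pow hn'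
  set q : ℝ := (n : ℝ) / ((n : ℝ) - 1)
  have hq : 1 < q := one_lt_div_sub_one hn'
  have hqn : q / (q - 1) = n := (hasSum_one_div_pow hq).unique hq_sum
  have hC0 : 0 < C := by linarith
  refine ⟨hq_sum.tsum_eq,
    multipliable_rpow_one_div_pow (a := 0) hq (fun _ => hC0) fun _ => by ring,
    multipliable_rpow_one_div_pow (a := log q) (b := 0) hq (fun i => pow_pos (by positivity) i)
      fun i => by rw [log_pow]; ring,
    fun R₀ hR₀ _ => multipliable_rpow_one_div_pow hq (fun _ => by positivity)
      (log_two_mul_inv_div_two_pow_sq hR₀),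
    exp (∑' i, moserLogFactor q C 1 i), exp_pos _, fun R₀ hR₀ hR₁ I hI hrec => ?_⟩
  have hsum := hasSum_moserLogFactor hq C R₀
  rw [hqn] at hsum
  calc limsup I atTop ≤ exp (∑' i, moserLogFactor q C R₀ i) * I 0 :=
        limsup_le_exp_tsum_mul_of_le_exp_mul hI (moserLogFactor_nonneg hq.le hC hR₀.le hR₁.le)
          hsum.summable fun i =>
            (hrec i).trans_eq (by rw [exp_moserLogFactor (by positivity) hC0 hR₀])
    _ = exp (∑' i, moserLogFactor q C 1 i) * R₀ ^ (-(2 * (n : ℝ))) * I 0 := by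
      rw [hsum.tsum_eq, exp_add, rpow_def_of_pos hR₀]
end
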